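/- Every basketball of order n ≥ 2 has at least two ears. -/

import Mathlib

open scoped Classical

def IsMatchingOn (M : Finset (Finset ℕ)) (S : Finset ℕ) : Prop :=
  (∀ b ∈ M, b.card = 2) ∧
  (∀ b ∈ M, ∀ b' ∈ M, b ≠ b' → Disjoint b b') ∧
  (∀ x, x ∈ S ↔ ∃ b ∈ M, x ∈ b)

def Cross (e o : Finset ℕ) : Prop :=
  (∃ i ∈ e, ∃ k ∈ e, ∃ j ∈ o, ∃ l ∈ o, i < j ∧ j < k ∧ k < l) ∨
  (∃ i ∈ o, ∃ k ∈ o, ∃ j ∈ e, ∃ l ∈ e, i < j ∧ j < k ∧ k < l)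

def IsNCMatchingOn (M : Finset (Finset ℕ)) (S : Finset ℕ) : Prop :=
  IsMatchingOn M S ∧ ∀ b ∈ M, ∀ b' ∈ M, b ≠ b' → ¬ Cross b b'

def En (n : ℕ) : Finset ℕ := (Finset.range (2 * n)).image (fun i => 2 * i)

def On (n : ℕ) : Finset ℕ := (Finset.range (2 * n)).image (fun i => 2 * i + 1)

def IsBasketball (n : ℕ) (Be Bo : Finset (Finset ℕ)) : Prop :=
  IsNCMatchingOn Be (En n) ∧ IsNCMatchingOn Bo (On n) ∧
  ∀ e ∈ Be, (Bo.filter (fun o => Cross e o)).card = 1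

def IsNCPartitionOn (Q : Finset (Finset ℕ)) (S : Finset ℕ) : Prop :=
  (∀ b ∈ Q, b.Nonempty) ∧
  (∀ b ∈ Q, ∀ b' ∈ Q, b ≠ b' → Disjoint b b') ∧
  (∀ x, x ∈ S ↔ ∃ b ∈ Q, x ∈ b) ∧
  (∀ b ∈ Q, ∀ b' ∈ Q, b ≠ b' → ¬ Cross b b')

/-- An ear of a basketball of order n: a crossing even/odd pair whose four
elements are consecutive modulo 4n (in some order). -/
def IsEar (n : ℕ) (e o : Finset ℕ) : Prop :=
  Cross e o ∧ ∃ s, e ∪ o =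
    ({s % (4 * n), (s + 1) % (4 * n), (s + 2) % (4 * n), (s + 3) % (4 * n)} : Finset ℕ)

/-!
Every even pair crosses exactly one odd pair, and a parity count shows that every odd pair
crosses some even pair; double counting then makes the crossing relation a bijection. So the
quartets `e ∪ o` form a noncrossing partition of `{0, …, 4n - 1}` into blocks of size four.
In such a partition, a block of least maximum among the blocks lying in a gap of another block
is an interval, since anything missing from it would be nested strictly inside it. Going around
the block containing `0`, either two of its gaps are nonempty, or one is and the block itself is
a cyclic interval; either way there are two ears.
-/

open Finset

lemma cross_comm {p q : Finset ℕ} : Cross p q ↔ Cross q p := or_comm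

lemma exists_lt_of_card_eq_two {s : Finset ℕ} (h : s.card = 2) : ∃ x y, x < y ∧ s = {x, y} := by
  obtain ⟨x, y, hxy, rfl⟩ := card_eq_two.mp h
  rcases lt_or_gt_of_ne hxy with h | h
  · exact ⟨x, y, h, rfl⟩
  · exact ⟨y, x, h, pair_comm x y⟩

lemma exists_lt_lt_lt_of_card_eq_four {s : Finset ℕ} (h : s.card = 4) :
    ∃ a b c d, a < b ∧ b < c ∧ c < d ∧ s = {a, b, c, d} := by
  obtain ⟨a, b, c, d, hl⟩ := List.length_eq_four.mp ((length_sort (· ≤ ·)).trans h)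
  have hsorted := (sortedLT_sort s).pairwise
  rw [hl] at hsorted
  simp only [List.pairwise_cons, List.mem_cons, List.not_mem_nil, or_false, forall_eq_or_imp,
    forall_eq, IsEmpty.forall_iff, implies_true, List.Pairwise.nil, and_self, and_true] at hsorted
  obtain ⟨⟨hab, -, -⟩, ⟨hbc, -⟩, hcd⟩ := hsorted
  refine ⟨a, b, c, d, hab, hbc, hcd, ?_⟩
  rw [← sort_toFinset s (· ≤ ·), hl]
  simp

lemma exists_sorted_of_cross {e o : Finset ℕ} (he : e.card = 2) (ho : o.card = 2) (h : Cross e o) :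
    ∃ a b c d, a < b ∧ b < c ∧ c < d ∧
      ((e = {a, c} ∧ o = {b, d}) ∨ (e = {b, d} ∧ o = {a, c})) := by
  obtain ⟨x, y, hxy, rfl⟩ := exists_lt_of_card_eq_two he
  obtain ⟨u, v, huv, rfl⟩ := exists_lt_of_card_eq_two ho
  have : (x < u ∧ u < y ∧ y < v) ∨ (u < x ∧ x < v ∧ v < y) := by
    rcases h with ⟨i, hi, k, hk, j, hj, l, hl, h⟩ | ⟨i, hi, k, hk, j, hj, l, hl, h⟩ <;>
      simp only [mem_insert, mem_singleton] at hi hk hj hl <;> omega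
  rcases this with ⟨h₁, h₂, h₃⟩ | ⟨h₁, h₂, h₃⟩
  · exact ⟨x, u, y, v, h₁, h₂, h₃, Or.inl ⟨rfl, rfl⟩⟩
  · exact ⟨u, x, v, y, h₁, h₂, h₃, Or.inr ⟨rfl, rfl⟩⟩

lemma Cross.not_disjoint_Ioo {p q : Finset ℕ} {x y : ℕ} (h : Cross p q) (hp : p ⊆ Ioo x y) :
    ¬Disjoint q (Ioo x y) := by
  rw [not_disjoint_iff]
  rcases h with ⟨i, hi, k, hk, j, hj, -, -, hij, hjk, -⟩ |
    ⟨-, -, k, hk, j, hj, l, hl, -, hjk, hkl⟩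
  · have := mem_Ioo.mp (hp hi); have := mem_Ioo.mp (hp hk)
    exact ⟨j, hj, mem_Ioo.mpr ⟨by omega, by omega⟩⟩
  · have := mem_Ioo.mp (hp hj); have := mem_Ioo.mp (hp hl)
    exact ⟨k, hk, mem_Ioo.mpr ⟨by omega, by omega⟩⟩

def Separated (p q : Finset ℕ) : Prop := Disjoint p q ∧ ¬Cross p q ∧ ¬Cross q p

namespace Separated

variable {p q : Finset ℕ} {x y : ℕ}

lemma symm (h : Separated p q) : Separated q p := ⟨h.1.symm, h.2.2, h.2.1⟩

lemma subset_Ioo_or_disjoint (h : Separated q p) (hx : x ∈ q) (hy : y ∈ q) :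
    p ⊆ Ioo x y ∨ Disjoint p (Ioo x y) := by
  rw [or_iff_not_imp_right, not_disjoint_iff]
  rintro ⟨t, htp, ht⟩ u hu
  rw [mem_Ioo] at ht ⊢
  have hux : u ≠ x := fun hux => disjoint_left.mp h.1 hx (hux ▸ hu)
  have huy : u ≠ y := fun huy => disjoint_left.mp h.1 hy (huy ▸ hu)
  by_contra hxuy
  rcases (by omega : u < x ∨ y < u) with hu' | hu'
  · exact h.2.2 (Or.inl ⟨u, hu, t, htp, x, hx, y, hy, hu', ht.1, ht.2⟩)
  · exact h.2.1 (Or.inl ⟨x, hx, y, hy, t, htp, u, hu, ht.1, ht.2, hu'⟩)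

lemma union_subset_Ioo_or_disjoint {r p' : Finset ℕ} (hp : Separated r p) (hp' : Separated r p')
    (h : Cross p p') (hx : x ∈ r) (hy : y ∈ r) :
    p ∪ p' ⊆ Ioo x y ∨ Disjoint (p ∪ p') (Ioo x y) := by
  rcases hp.subset_Ioo_or_disjoint hx hy with h₁ | h₁ <;>
    rcases hp'.subset_Ioo_or_disjoint hx hy with h₂ | h₂
  · exact Or.inl (union_subset h₁ h₂)
  · exact absurd h₂ (h.not_disjoint_Ioo h₁)
  · exact absurd h₁ ((cross_comm.mp h).not_disjoint_Ioo h₂)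
  · exact Or.inr (disjoint_union_left.mpr ⟨h₁, h₂⟩)

end Separated

/-- The four regions cut out by `a < b < c < d` (with the two outer pieces counted as one) are
told apart by membership in `(a, c)` and in `(b, d)`, so the hypotheses put `Y` in one region. -/
lemma not_cross_of_subset_Ioo_or_disjoint {a b c d : ℕ} {Y : Finset ℕ} (hab : a < b)
    (hbc : b < c) (hcd : c < d) (hY : Disjoint {a, b, c, d} Y)
    (hac : Y ⊆ Ioo a c ∨ Disjoint Y (Ioo a c)) (hbd : Y ⊆ Ioo b d ∨ Disjoint Y (Ioo b d)) :
    ¬Cross {a, b, c, d} Y := by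
  have hout : ∀ y ∈ Y, y ≠ a ∧ y ≠ b ∧ y ≠ c ∧ y ≠ d := fun y hy => by
    have := disjoint_right.mp hY hy
    simp only [mem_insert, mem_singleton, not_or] at this
    exact this
  have side : ∀ {u v : ℕ}, (Y ⊆ Ioo u v ∨ Disjoint Y (Ioo u v)) →
      ∀ y ∈ Y, ∀ y' ∈ Y, (u < y ∧ y < v ↔ u < y' ∧ y' < v) := by
    rintro u v (h | h) y hy y' hy'
    · simp only [← mem_Ioo, h hy, h hy']
    · simp only [← mem_Ioo, disjoint_left.mp h hy, disjoint_left.mp h hy']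
  rintro (⟨i, hi, k, hk, j, hj, l, hl, h⟩ | ⟨i, hi, k, hk, j, hj, l, hl, h⟩)
  · have := side hac j hj l hl; have := side hbd j hj l hl
    have := hout j hj; have := hout l hl
    simp only [mem_insert, mem_singleton] at hi hk
    rcases hi with rfl | rfl | rfl | rfl <;> rcases hk with rfl | rfl | rfl | rfl <;> omega
  · have := side hac i hi k hk; have := side hbd i hi k hk
    have := hout i hi; have := hout k hk
    simp only [mem_insert, mem_singleton] at hj hl
    rcases hj with rfl | rfl | rfl | rfl <;> rcases hl with rfl | rfl | rfl | rfl <;> omega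

lemma Separated.not_cross_union_union {e o e' o' : Finset ℕ} (he : e.card = 2) (ho : o.card = 2)
    (h : Cross e o) (h' : Cross e' o') (hd : Disjoint (e ∪ o) (e' ∪ o')) (hee : Separated e e')
    (heo : Separated e o') (hoe : Separated o e') (hoo : Separated o o') :
    ¬Cross (e ∪ o) (e' ∪ o') := by
  obtain ⟨a, b, c, d, hab, hbc, hcd, ⟨rfl, rfl⟩ | ⟨rfl, rfl⟩⟩ := exists_sorted_of_cross he ho h
  · have hX : ({a, c} ∪ {b, d} : Finset ℕ) = {a, b, c, d} := by ext; simp; tauto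
    rw [hX] at hd ⊢
    exact not_cross_of_subset_Ioo_or_disjoint hab hbc hcd hd
      (hee.union_subset_Ioo_or_disjoint heo h' (by simp) (by simp))
      (hoe.union_subset_Ioo_or_disjoint hoo h' (by simp) (by simp))
  · have hX : ({b, d} ∪ {a, c} : Finset ℕ) = {a, b, c, d} := by ext; simp; tauto
    rw [hX] at hd ⊢
    exact not_cross_of_subset_Ioo_or_disjoint hab hbc hcd hd
      (hoe.union_subset_Ioo_or_disjoint hoo h' (by simp) (by simp))
      (hee.union_subset_Ioo_or_disjoint heo h' (by simp) (by simp))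

lemma Separated.union_union {e o e' o' : Finset ℕ} (he : e.card = 2) (ho : o.card = 2)
    (he' : e'.card = 2) (ho' : o'.card = 2) (h : Cross e o) (h' : Cross e' o')
    (hee : Separated e e') (heo : Separated e o') (hoe : Separated o e') (hoo : Separated o o') :
    Separated (e ∪ o) (e' ∪ o') := by
  have hd : Disjoint (e ∪ o) (e' ∪ o') := disjoint_union_left.mpr
    ⟨disjoint_union_right.mpr ⟨hee.1, heo.1⟩, disjoint_union_right.mpr ⟨hoe.1, hoo.1⟩⟩
  exact ⟨hd, not_cross_union_union he ho h h' hd hee heo hoe hoo,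
    not_cross_union_union he' ho' h' h hd.symm hee.symm hoe.symm heo.symm hoo.symm⟩

def IsArc (m : ℕ) (q : Finset ℕ) : Prop :=
  ∃ s, q = ({s % m, (s + 1) % m, (s + 2) % m, (s + 3) % m} : Finset ℕ)

lemma isArc_of_forall_mem_iff {m : ℕ} {q : Finset ℕ} (s : ℕ) (hs : s < m) (hm : 3 ≤ m)
    (h : ∀ t, t ∈ q ↔ (s ≤ t ∧ t ≤ s + 3 ∧ t < m) ∨ t + m ≤ s + 3) : IsArc m q := by
  have hmod : ∀ i ≤ 3, (s + i) % m = if s + i < m then s + i else s + i - m := fun i hi => by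
    split_ifs with h'
    · exact Nat.mod_eq_of_lt h'
    · rw [Nat.mod_eq_sub_mod (by omega), Nat.mod_eq_of_lt (by omega)]
  refine ⟨s, ?_⟩
  ext t
  simp only [h, mem_insert, mem_singleton, Nat.mod_eq_of_lt hs, hmod 1 (by norm_num),
    hmod 2 (by norm_num), hmod 3 (by norm_num)]
  split_ifs <;> omega

lemma isArc_Icc {m s : ℕ} (h : s + 3 < m) : IsArc m (Icc s (s + 3)) :=
  isArc_of_forall_mem_iff s (by omega) (by omega) fun t => by rw [mem_Icc]; omega

namespace IsNCPartitionOn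

variable {m : ℕ} {Q : Finset (Finset ℕ)} (hQ : IsNCPartitionOn Q (range m))
include hQ

lemma separated {p q : Finset ℕ} (hp : p ∈ Q) (hq : q ∈ Q) (hne : p ≠ q) : Separated p q :=
  ⟨hQ.2.1 p hp q hq hne, hQ.2.2.2 p hp q hq hne, hQ.2.2.2 q hq p hp hne.symm⟩

lemma exists_mem {t : ℕ} (ht : t < m) : ∃ q ∈ Q, t ∈ q := (hQ.2.2.1 t).mp (mem_range.mpr ht)

lemma lt_of_mem {q : Finset ℕ} (hq : q ∈ Q) {t : ℕ} (ht : t ∈ q) : t < m :=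
  mem_range.mp ((hQ.2.2.1 t).mpr ⟨q, hq, ht⟩)

/-- A block of least maximum among the blocks inside `[lo, hi)` has no gaps: a point missing
from it would lie in another block, nested strictly inside it. -/
lemma exists_Icc_mem (h4 : ∀ q ∈ Q, q.card = 4) {lo hi : ℕ} {q₀ : Finset ℕ} (hq₀ : q₀ ∈ Q)
    (hsub : q₀ ⊆ Ico lo hi) : ∃ s, Icc s (s + 3) ∈ Q ∧ lo ≤ s ∧ s + 3 < hi := by
  obtain ⟨q, hqF, hmin⟩ := (Q.filter (· ⊆ Ico lo hi)).exists_min_image (fun q => q.sup id)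
    ⟨q₀, mem_filter.mpr ⟨hq₀, hsub⟩⟩
  obtain ⟨hq, hqsub⟩ := mem_filter.mp hqF
  have hne : q.Nonempty := card_pos.mp (by rw [h4 q hq]; norm_num)
  obtain ⟨M, hMq, hM⟩ := exists_mem_eq_sup q hne id
  rw [id] at hM
  have hle : ∀ u ∈ q, u ≤ M := fun u hu => hM ▸ le_sup (f := id) hu
  have hfill : ∀ x ∈ q, ∀ t, x < t → t < M → t ∈ q := by
    intro x hx t hxt htM
    by_contra htq
    obtain ⟨q', hq', htq'⟩ := hQ.exists_mem (htM.trans (hQ.lt_of_mem hq hMq))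
    have hne' : q ≠ q' := fun h => htq (h ▸ htq')
    rcases (hQ.separated hq hq' hne').subset_Ioo_or_disjoint hx hMq with h | h
    · have hlt : q'.sup id < M :=
        (Finset.sup_lt_iff (by rw [Nat.bot_eq_zero]; omega)).mpr fun u hu => (mem_Ioo.mp (h hu)).2
      have hsub' : q' ⊆ Ico lo hi := fun u hu => by
        have := mem_Ioo.mp (h hu); have := mem_Ico.mp (hqsub hx); have := mem_Ico.mp (hqsub hMq)
        exact mem_Ico.mpr ⟨by omega, by omega⟩
      have := hmin q' (mem_filter.mpr ⟨hq', hsub'⟩)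
      omega
    · exact disjoint_left.mp h htq' (mem_Ioo.mpr ⟨hxt, htM⟩)
  set a := q.min' hne
  have hqa : q = Icc a M := by
    ext t
    refine ⟨fun ht => mem_Icc.mpr ⟨min'_le q t ht, hle t ht⟩, fun ht => ?_⟩
    obtain ⟨hat, htM⟩ := mem_Icc.mp ht
    rcases hat.eq_or_lt with rfl | hat
    · exact min'_mem q hne
    rcases htM.eq_or_lt with rfl | htM
    · exact hMq
    exact hfill a (min'_mem q hne) t hat htM
  have hMa : M = a + 3 := by
    have := h4 q hq
    rw [hqa, Nat.card_Icc] at this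
    omega
  have := mem_Ico.mp (hqsub (min'_mem q hne)); have := mem_Ico.mp (hqsub hMq)
  exact ⟨a, hMa ▸ hqa ▸ hq, by omega, by omega⟩

lemma exists_Icc_mem_of_gap (h4 : ∀ q ∈ Q, q.card = 4) {p : Finset ℕ} (hp : p ∈ Q) {x y t : ℕ}
    (hx : x ∈ p) (hy : y ∈ p) (hxt : x < t) (hty : t < y) (htp : t ∉ p) :
    ∃ s, Icc s (s + 3) ∈ Q ∧ x < s ∧ s + 3 < y := by
  obtain ⟨q, hq, htq⟩ := hQ.exists_mem (hty.trans (hQ.lt_of_mem hp hy))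
  have hsub : q ⊆ Ioo x y := by
    refine ((hQ.separated hp hq fun h => htp (h ▸ htq)).subset_Ioo_or_disjoint hx hy).resolve_right
      (not_disjoint_iff.mpr ⟨t, htq, mem_Ioo.mpr ⟨hxt, hty⟩⟩)
  obtain ⟨s, hs, hxs, hsy⟩ := hQ.exists_Icc_mem h4 hq (lo := x + 1) (hi := y) fun u hu => by
    have := mem_Ioo.mp (hsub hu); exact mem_Ico.mpr ⟨by omega, by omega⟩
  exact ⟨s, hs, by omega, hsy⟩

lemma exists_Icc_mem_of_gap_top (h4 : ∀ q ∈ Q, q.card = 4) {p : Finset ℕ} (hp : p ∈ Q)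
    {y t : ℕ} (h0 : 0 ∈ p) (hy : y ∈ p) (hyt : y < t) (htm : t < m) (htp : t ∉ p) :
    ∃ s, Icc s (s + 3) ∈ Q ∧ y < s ∧ s + 3 < m := by
  obtain ⟨q, hq, htq⟩ := hQ.exists_mem htm
  have hsep := hQ.separated hp hq fun h => htp (h ▸ htq)
  have hout : Disjoint q (Ioo 0 y) := by
    refine (hsep.subset_Ioo_or_disjoint h0 hy).resolve_left fun h => ?_
    have := mem_Ioo.mp (h htq); omega
  obtain ⟨s, hs, hys, hsm⟩ := hQ.exists_Icc_mem h4 hq (lo := y + 1) (hi := m) fun u hu => by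
    have hu₁ : u ∉ Ioo 0 y := disjoint_left.mp hout hu
    have hu₂ : u ≠ 0 := fun h => disjoint_left.mp hsep.1 h0 (h ▸ hu)
    have hu₃ : u ≠ y := fun h => disjoint_left.mp hsep.1 hy (h ▸ hu)
    rw [mem_Ioo] at hu₁
    exact mem_Ico.mpr ⟨by omega, hQ.lt_of_mem hq hu⟩
  exact ⟨s, hs, by omega, hsm⟩

end IsNCPartitionOn

lemma exists_ne_isArc_of_Icc_mem {m s s' : ℕ} {Q : Finset (Finset ℕ)} (hs : Icc s (s + 3) ∈ Q)
    (hs' : Icc s' (s' + 3) ∈ Q) (hss' : s + 3 < s') (hs'm : s' + 3 < m) :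
    ∃ q₁ ∈ Q, ∃ q₂ ∈ Q, q₁ ≠ q₂ ∧ IsArc m q₁ ∧ IsArc m q₂ := by
  refine ⟨_, hs, _, hs', fun h => ?_, isArc_Icc (by omega), isArc_Icc hs'm⟩
  have := mem_Icc.mp (h ▸ left_mem_Icc.mpr (Nat.le_add_right s 3))
  omega

lemma exists_ne_isArc_of_isArc {m s : ℕ} {Q : Finset (Finset ℕ)} {p : Finset ℕ} (hp : p ∈ Q)
    (harc : IsArc m p) (hs : Icc s (s + 3) ∈ Q) (hsp : s ∉ p) (hsm : s + 3 < m) :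
    ∃ q₁ ∈ Q, ∃ q₂ ∈ Q, q₁ ≠ q₂ ∧ IsArc m q₁ ∧ IsArc m q₂ :=
  ⟨p, hp, _, hs, fun h => hsp (h ▸ left_mem_Icc.mpr (Nat.le_add_right s 3)), harc, isArc_Icc hsm⟩

/-- Each nonempty gap of `{0, b, c, d}` contains an interval block; if only one gap is nonempty,
`{0, b, c, d}` is itself an arc through `m - 1` and `0`. -/
lemma IsNCPartitionOn.exists_ne_isArc_of_last_mem {m b c d : ℕ} {Q : Finset (Finset ℕ)}
    (hQ : IsNCPartitionOn Q (range m)) (h4 : ∀ q ∈ Q, q.card = 4) (hm : 4 < m)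
    (hp : {0, b, c, d} ∈ Q) (hb : 0 < b) (hbc : b < c) (hcd : c < d) (hdm : d + 1 = m) :
    ∃ q₁ ∈ Q, ∃ q₂ ∈ Q, q₁ ≠ q₂ ∧ IsArc m q₁ ∧ IsArc m q₂ := by
  have E₁ : 1 < b → ∃ s, Icc s (s + 3) ∈ Q ∧ 0 < s ∧ s + 3 < b := fun h =>
    hQ.exists_Icc_mem_of_gap h4 hp (by simp) (by simp) one_pos h (by simp; omega)
  have E₂ : b + 1 < c → ∃ s, Icc s (s + 3) ∈ Q ∧ b < s ∧ s + 3 < c := fun h =>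
    hQ.exists_Icc_mem_of_gap h4 hp (by simp) (by simp) (lt_add_one b) h (by simp; omega)
  have E₃ : c + 1 < d → ∃ s, Icc s (s + 3) ∈ Q ∧ c < s ∧ s + 3 < d := fun h =>
    hQ.exists_Icc_mem_of_gap h4 hp (by simp) (by simp) (lt_add_one c) h (by simp; omega)
  rcases Nat.lt_or_ge 1 b with h₁ | h₁
  · obtain ⟨s, hs, hs0, hsb⟩ := E₁ h₁
    rcases Nat.lt_or_ge (b + 1) c with h₂ | h₂
    · obtain ⟨s', hs', hbs', hs'c⟩ := E₂ h₂
      exact exists_ne_isArc_of_Icc_mem hs hs' (by omega) (by omega)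
    rcases Nat.lt_or_ge (c + 1) d with h₃ | h₃
    · obtain ⟨s', hs', hcs', hs'd⟩ := E₃ h₃
      exact exists_ne_isArc_of_Icc_mem hs hs' (by omega) (by omega)
    exact exists_ne_isArc_of_isArc hp
      (isArc_of_forall_mem_iff b (by omega) (by omega) fun t => by simp; omega) hs
      (by simp; omega) (by omega)
  rcases Nat.lt_or_ge (b + 1) c with h₂ | h₂
  · obtain ⟨s, hs, hbs, hsc⟩ := E₂ h₂
    rcases Nat.lt_or_ge (c + 1) d with h₃ | h₃
    · obtain ⟨s', hs', hcs', hs'd⟩ := E₃ h₃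
      exact exists_ne_isArc_of_Icc_mem hs hs' (by omega) (by omega)
    exact exists_ne_isArc_of_isArc hp
      (isArc_of_forall_mem_iff c (by omega) (by omega) fun t => by simp; omega) hs
      (by simp; omega) (by omega)
  obtain ⟨s, hs, hcs, hsd⟩ := E₃ (by omega)
  exact exists_ne_isArc_of_isArc hp
    (isArc_of_forall_mem_iff d (by omega) (by omega) fun t => by simp; omega) hs
    (by simp; omega) (by omega)

/-- Look at the block `{0, b, c, d}` of `0`. If `d + 1 < m`, both `[0, d]`, which contains it,
and the gap `(d, m)` contain an interval block. -/
lemma IsNCPartitionOn.exists_ne_isArc {m : ℕ} {Q : Finset (Finset ℕ)}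
    (hQ : IsNCPartitionOn Q (range m)) (h4 : ∀ q ∈ Q, q.card = 4) (hm : 4 < m) :
    ∃ q₁ ∈ Q, ∃ q₂ ∈ Q, q₁ ≠ q₂ ∧ IsArc m q₁ ∧ IsArc m q₂ := by
  obtain ⟨p, hp, h0⟩ := hQ.exists_mem (t := 0) (by omega)
  obtain ⟨a, b, c, d, hab, hbc, hcd, rfl⟩ := exists_lt_lt_lt_of_card_eq_four (h4 p hp)
  obtain rfl : a = 0 := by simp only [mem_insert, mem_singleton] at h0; omega
  have hdm : d < m := hQ.lt_of_mem hp (by simp)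
  rcases Nat.lt_or_ge (d + 1) m with hd | hd
  · obtain ⟨s, hs, -, hsd⟩ := hQ.exists_Icc_mem h4 hp (lo := 0) (hi := d + 1) fun u hu => by
      simp only [mem_insert, mem_singleton] at hu; exact mem_Ico.mpr ⟨by omega, by omega⟩
    obtain ⟨s', hs', hds', hs'm⟩ := hQ.exists_Icc_mem_of_gap_top h4 hp (by simp) (by simp)
      (lt_add_one d) hd (by simp; omega)
    exact exists_ne_isArc_of_Icc_mem hs hs' (by omega) hs'm
  · exact hQ.exists_ne_isArc_of_last_mem h4 hm hp hab hbc hcd (by omega)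

namespace IsMatchingOn

variable {M : Finset (Finset ℕ)} {S : Finset ℕ} (hM : IsMatchingOn M S)
include hM

lemma subset {b : Finset ℕ} (hb : b ∈ M) : b ⊆ S := fun t ht => (hM.2.2 t).mpr ⟨b, hb, ht⟩

lemma card_eq : S.card = 2 * M.card := by
  have hS : S = M.biUnion id := by ext t; simp [hM.2.2 t]
  rw [hS, card_biUnion (t := id) fun b hb b' hb' hne => hM.2.1 b hb b' hb' hne]
  exact (sum_const_nat fun b hb => hM.1 b hb).trans (mul_comm _ _)

lemma inter {I : Finset ℕ} (hI : ∀ b ∈ M, b ⊆ I ∨ Disjoint b I) :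
    IsMatchingOn (M.filter (· ⊆ I)) (S ∩ I) := by
  refine ⟨fun b hb => hM.1 b (mem_filter.mp hb).1,
    fun b hb b' hb' => hM.2.1 b (mem_filter.mp hb).1 b' (mem_filter.mp hb').1, fun t => ?_⟩
  simp only [mem_inter, mem_filter]
  constructor
  · rintro ⟨htS, htI⟩
    obtain ⟨b, hb, htb⟩ := (hM.2.2 t).mp htS
    exact ⟨b, ⟨hb, (hI b hb).resolve_right (not_disjoint_iff.mpr ⟨t, htb, htI⟩)⟩, htb⟩
  · rintro ⟨b, ⟨hb, hbI⟩, htb⟩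
    exact ⟨hM.subset hb htb, hbI htb⟩

end IsMatchingOn

lemma IsNCMatchingOn.separated {M : Finset (Finset ℕ)} {S : Finset ℕ} (hM : IsNCMatchingOn M S)
    {b b' : Finset ℕ} (hb : b ∈ M) (hb' : b' ∈ M) (hne : b ≠ b') : Separated b b' :=
  ⟨hM.1.2.1 b hb b' hb' hne, hM.2 b hb b' hb' hne, hM.2 b' hb' b hb hne.symm⟩

lemma mem_En {n t : ℕ} : t ∈ En n ↔ t % 2 = 0 ∧ t < 4 * n := by
  simp only [En, mem_image, mem_range]
  exact ⟨fun ⟨i, hi, h⟩ => by omega, fun h => ⟨t / 2, by omega, by omega⟩⟩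

lemma mem_On {n t : ℕ} : t ∈ On n ↔ t % 2 = 1 ∧ t < 4 * n := by
  simp only [On, mem_image, mem_range]
  exact ⟨fun ⟨i, hi, h⟩ => by omega, fun h => ⟨t / 2, by omega, by omega⟩⟩

lemma card_En (n : ℕ) : (En n).card = 2 * n := by
  rw [En, card_image_of_injective _ fun a b h => by omega, card_range]

lemma card_On (n : ℕ) : (On n).card = 2 * n := by
  rw [On, card_image_of_injective _ fun a b h => by omega, card_range]

lemma disjoint_En_On (n : ℕ) : Disjoint (En n) (On n) :=
  disjoint_left.mpr fun t h h' => by rw [mem_En] at h; rw [mem_On] at h'; omega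

lemma En_union_On (n : ℕ) : En n ∪ On n = range (4 * n) := by
  ext t; rw [mem_union, mem_En, mem_On, mem_range]; omega

noncomputable def quartets (Be Bo : Finset (Finset ℕ)) : Finset (Finset ℕ) :=
  ((Be ×ˢ Bo).filter fun p => Cross p.1 p.2).image fun p => p.1 ∪ p.2

lemma mem_quartets {Be Bo : Finset (Finset ℕ)} {q : Finset ℕ} :
    q ∈ quartets Be Bo ↔ ∃ e ∈ Be, ∃ o ∈ Bo, Cross e o ∧ e ∪ o = q := by
  simp [quartets, and_assoc]

namespace IsBasketball

variable {n : ℕ} {Be Bo : Finset (Finset ℕ)} (hB : IsBasketball n Be Bo)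
include hB

lemma disjoint_of_mem {e o : Finset ℕ} (he : e ∈ Be) (ho : o ∈ Bo) : Disjoint e o :=
  disjoint_of_subset_left (hB.1.1.subset he) (disjoint_of_subset_right (hB.2.1.1.subset ho)
    (disjoint_En_On n))

lemma separated_of_not_cross {e o : Finset ℕ} (he : e ∈ Be) (ho : o ∈ Bo) (h : ¬Cross e o) :
    Separated e o :=
  ⟨hB.disjoint_of_mem he ho, h, fun h' => h (cross_comm.mp h')⟩

lemma exists_cross_right {e : Finset ℕ} (he : e ∈ Be) : ∃ o ∈ Bo, Cross e o := by
  obtain ⟨o, ho⟩ := card_eq_one.mp (hB.2.2 e he)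
  exact ⟨o, mem_filter.mp (ho ▸ mem_singleton_self o)⟩

/-- Parity: if `o = {b, d}` crossed no `e`, the evens and the odds strictly between `b` and `d`
would both be unions of pairs, but there are `d - b - 1` of them in total, an odd number. -/
lemma exists_cross_left {o : Finset ℕ} (ho : o ∈ Bo) : ∃ e ∈ Be, Cross e o := by
  by_contra! hcon
  obtain ⟨b, d, hbd, rfl⟩ := exists_lt_of_card_eq_two (hB.2.1.1.1 _ ho)
  have hbo : b ∈ ({b, d} : Finset ℕ) := mem_insert_self b {d}
  have hdo : d ∈ ({b, d} : Finset ℕ) := mem_insert_of_mem (mem_singleton_self d)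
  have hb := mem_On.mp (hB.2.1.1.subset ho hbo)
  have hd := mem_On.mp (hB.2.1.1.subset ho hdo)
  have hE := (hB.1.1.inter (I := Ioo b d) fun e he => Separated.subset_Ioo_or_disjoint
    (hB.separated_of_not_cross he ho (hcon e he)).symm hbo hdo).card_eq
  have hO := (hB.2.1.1.inter (I := Ioo b d) fun o' ho' => by
    by_cases h : o' = {b, d}
    · subst h
      exact Or.inr (disjoint_left.mpr fun t ht ht' => by
        simp only [mem_insert, mem_singleton, mem_Ioo] at ht ht'; omega)
    · exact (hB.2.1.separated ho ho' (Ne.symm h)).subset_Ioo_or_disjoint hbo hdo).card_eq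
  have hsum : (En n ∩ Ioo b d).card + (On n ∩ Ioo b d).card = d - b - 1 := by
    rw [← card_union_of_disjoint (disjoint_of_subset_left inter_subset_left
      (disjoint_of_subset_right inter_subset_left (disjoint_En_On n))), ← union_inter_distrib_right,
      En_union_On, inter_eq_right.mpr fun t ht => mem_range.mpr (by rw [mem_Ioo] at ht; omega),
      Nat.card_Ioo]
  omega

/-- Double counting: every `o` crosses some `e`, each `e` crosses exactly one `o`, and
`Be` and `Bo` have the same size. -/
lemma card_filter_cross_left {o : Finset ℕ} (ho : o ∈ Bo) : (Be.filter (Cross · o)).card = 1 := by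
  have hcard : Be.card = Bo.card := by
    have := hB.1.1.card_eq; have := hB.2.1.1.card_eq; rw [card_En] at *; rw [card_On] at *; omega
  have hsum : ∑ o ∈ Bo, (Be.filter (Cross · o)).card = ∑ _o ∈ Bo, 1 := by
    calc ∑ o ∈ Bo, (Be.filter (Cross · o)).card
        = ∑ e ∈ Be, (Bo.filter (Cross e ·)).card :=
          (sum_card_bipartiteAbove_eq_sum_card_bipartiteBelow (r := Cross)).symm
      _ = ∑ _o ∈ Bo, 1 := by rw [sum_congr rfl hB.2.2, sum_const, sum_const, hcard]
  have hpos : ∀ o ∈ Bo, 1 ≤ (Be.filter (Cross · o)).card := fun o ho =>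
    card_pos.mpr (let ⟨e, he, h⟩ := hB.exists_cross_left ho; ⟨e, mem_filter.mpr ⟨he, h⟩⟩)
  exact ((sum_eq_sum_iff_of_le hpos).mp hsum.symm o ho).symm

lemma eq_of_cross_right {e o o' : Finset ℕ} (he : e ∈ Be) (ho : o ∈ Bo) (ho' : o' ∈ Bo)
    (h : Cross e o) (h' : Cross e o') : o = o' :=
  card_le_one.mp (hB.2.2 e he).le o (mem_filter.mpr ⟨ho, h⟩) o' (mem_filter.mpr ⟨ho', h'⟩)

lemma eq_of_cross_left {e e' o : Finset ℕ} (he : e ∈ Be) (he' : e' ∈ Be) (ho : o ∈ Bo)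
    (h : Cross e o) (h' : Cross e' o) : e = e' :=
  card_le_one.mp (hB.card_filter_cross_left ho).le e (mem_filter.mpr ⟨he, h⟩) e'
    (mem_filter.mpr ⟨he', h'⟩)

lemma card_of_mem_quartets {q : Finset ℕ} (hq : q ∈ quartets Be Bo) : q.card = 4 := by
  obtain ⟨e, he, o, ho, -, rfl⟩ := mem_quartets.mp hq
  rw [card_union_of_disjoint (hB.disjoint_of_mem he ho), hB.1.1.1 e he, hB.2.1.1.1 o ho]

lemma separated_of_mem_quartets {q q' : Finset ℕ} (hq : q ∈ quartets Be Bo)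
    (hq' : q' ∈ quartets Be Bo) (hne : q ≠ q') : Separated q q' := by
  obtain ⟨e, he, o, ho, h, rfl⟩ := mem_quartets.mp hq
  obtain ⟨e', he', o', ho', h', rfl⟩ := mem_quartets.mp hq'
  have hee : e ≠ e' := by rintro rfl; exact hne (by rw [hB.eq_of_cross_right he ho ho' h h'])
  have hoo : o ≠ o' := by rintro rfl; exact hne (by rw [hB.eq_of_cross_left he he' ho h h'])
  exact Separated.union_union (hB.1.1.1 e he) (hB.2.1.1.1 o ho) (hB.1.1.1 e' he')
    (hB.2.1.1.1 o' ho') h h' (hB.1.separated he he' hee)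
    (hB.separated_of_not_cross he ho' fun h'' => hoo (hB.eq_of_cross_right he ho ho' h h''))
    (hB.separated_of_not_cross he' ho fun h'' =>
      hoo (hB.eq_of_cross_right he' ho' ho h' h'').symm).symm
    (hB.2.1.separated ho ho' hoo)

lemma isNCPartitionOn_quartets : IsNCPartitionOn (quartets Be Bo) (range (4 * n)) := by
  refine ⟨fun q hq => card_pos.mp (by rw [hB.card_of_mem_quartets hq]; norm_num),
    fun q hq q' hq' hne => (hB.separated_of_mem_quartets hq hq' hne).1, fun t => ?_,
    fun q hq q' hq' hne => (hB.separated_of_mem_quartets hq hq' hne).2.1⟩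
  rw [← En_union_On, mem_union]
  constructor
  · rintro (htE | htO)
    · obtain ⟨e, he, hte⟩ := (hB.1.1.2.2 t).mp htE
      obtain ⟨o, ho, h⟩ := hB.exists_cross_right he
      exact ⟨e ∪ o, mem_quartets.mpr ⟨e, he, o, ho, h, rfl⟩, mem_union_left o hte⟩
    · obtain ⟨o, ho, hto⟩ := (hB.2.1.1.2.2 t).mp htO
      obtain ⟨e, he, h⟩ := hB.exists_cross_left ho
      exact ⟨e ∪ o, mem_quartets.mpr ⟨e, he, o, ho, h, rfl⟩, mem_union_right e hto⟩
  · rintro ⟨q, hq, htq⟩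
    obtain ⟨e, he, o, ho, -, rfl⟩ := mem_quartets.mp hq
    exact (mem_union.mp htq).imp (hB.1.1.subset he ·) (hB.2.1.1.subset ho ·)

end IsBasketball

theorem stmt_8 (n : ℕ) (hn : 2 ≤ n) (Be Bo : Finset (Finset ℕ))
    (hB : IsBasketball n Be Bo) :
    ∃ e₁ ∈ Be, ∃ o₁ ∈ Bo, ∃ e₂ ∈ Be, ∃ o₂ ∈ Bo,
      IsEar n e₁ o₁ ∧ IsEar n e₂ o₂ ∧ (e₁ ≠ e₂ ∨ o₁ ≠ o₂) := by
  obtain ⟨q₁, hq₁, q₂, hq₂, hne, harc₁, harc₂⟩ :=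
    hB.isNCPartitionOn_quartets.exists_ne_isArc (fun q hq => hB.card_of_mem_quartets hq) (by omega)
  obtain ⟨e₁, he₁, o₁, ho₁, h₁, rfl⟩ := mem_quartets.mp hq₁
  obtain ⟨e₂, he₂, o₂, ho₂, h₂, rfl⟩ := mem_quartets.mp hq₂
  refine ⟨e₁, he₁, o₁, ho₁, e₂, he₂, o₂, ho₂, ⟨h₁, harc₁⟩, ⟨h₂, harc₂⟩, ?_⟩
  by_contra! h
  obtain ⟨rfl, rfl⟩ := h
  exact hne rfl
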